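/- arXiv:1005.3470 — 2 statements merged into one kernel-verified Lean document; each statement's English description precedes it below -/
import Mathlib

section
/- (Main theorem: monotonicity of SIR mean final extent.) Let G(V,A) be a finite directed graph. Let τ₊(e) ≥ τ(e) for all edges e, γ₋(v) ≤ γ(v) for all nodes v, and σ₊(v) ≥ σ(v) for all nodes v. Consider the discrete-time SIR epidemic Ē with parameters (σ₊, γ₋, τ₊) and the epidemic E with parameters (σ, γ, τ). Then the mean final extent satisfies E_{σ₊,γ₋,τ₊}(|R_n|) ≥ E_{σ,γ,τ}(|R_n|). -/
open Finset

/-- A full assignment of random coins for the epidemic: initial-infection coins,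
removal coins, and per-(ordered-)edge transmission coins. -/
abbrev Coins (V : Type*) := (V → Bool) × (V → Bool) × (V → V → Bool)

variable {V : Type*} [Fintype V] [DecidableEq V]

/-- Probability weight of a coin outcome `ω` under induction probabilities `σ`,
removal probabilities `γ` and transmission probabilities `τ`. -/
def coinWeight (σ γ : V → ℝ) (τ : V → V → ℝ) (ω : Coins V) : ℝ :=
  (∏ v, if ω.1 v then σ v else 1 - σ v) *
  (∏ v, if ω.2.1 v then γ v else 1 - γ v) *
  ∏ u, ∏ v, if ω.2.2 u v then τ u v else 1 - τ u v

/-- One step of the discrete-time SIR process: state is `(I, R)`.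
An infected node, unless removed (removal coin `true`), transmits to each
susceptible out-neighbour whose transmission coin is `true`; then it recovers. -/
def sirStep (A : V → V → Bool) (ω : Coins V) (p : Finset V × Finset V) :
    Finset V × Finset V :=
  (univ.filter (fun v => v ∉ p.1 ∧ v ∉ p.2 ∧
      ∃ u ∈ p.1, ω.2.1 u = false ∧ A u v = true ∧ ω.2.2 u v = true),
   p.2 ∪ p.1)

/-- The discrete-time SIR process `(I_t, R_t)`; susceptibles are the complement. -/
def sirProc (A : V → V → Bool) (ω : Coins V) : ℕ → Finset V × Finset V
  | 0 => (univ.filter (fun v => ω.1 v = true), ∅)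
  | t + 1 => sirStep A ω (sirProc A ω t)

/-- The set of ever-infected nodes (the epidemic is stationary by time `n = |V|`). -/
def everInf (A : V → V → Bool) (ω : Coins V) : Finset V :=
  (sirProc A ω (Fintype.card V)).1 ∪ (sirProc A ω (Fintype.card V)).2

/-- The mean final extent `E(|R_n|)` of the SIR epidemic. -/
def meanExtent (A : V → V → Bool) (σ γ : V → ℝ) (τ : V → V → ℝ) : ℝ :=
  ∑ ω : Coins V, coinWeight σ γ τ ω * ((everInf A ω).card : ℝ)

/-- The probability that node `u` is ultimately infected. -/
def probInf (A : V → V → Bool) (σ γ : V → ℝ) (τ : V → V → ℝ) (u : V) : ℝ :=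
  ∑ ω : Coins V, coinWeight σ γ τ ω * (if u ∈ everInf A ω then 1 else 0)

/-!
Couple the two epidemics on one probability space. Independent Bernoulli coins with parameters
`p ≤ q` can be coupled coordinatewise so that each coin of the first family lies below the
corresponding coin of the second. With the removal coins negated, raising `σ`, `τ` and lowering
`γ` raises every coin parameter, and the set of ever-infected nodes grows with every coin: it is
the closure of the initially infected set under transmission along open edges (transmission coin
on, source not removed). So under the coupling the second final extent dominates the first
pointwise.
-/

section BernoulliCoupling

variable {ι : Type*} [Fintype ι]

def bernoulliWeight (p : ι → ℝ) (ω : ι → Bool) : ℝ :=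
  ∏ i, if ω i then p i else 1 - p i

/-- The monotone coupling of `Bernoulli p` and `Bernoulli q` for `p ≤ q`. -/
def boolCoupling (p q : ℝ) : Bool → Bool → ℝ
  | false, false => 1 - q
  | false, true => q - p
  | true, false => 0
  | true, true => p

lemma boolCoupling_nonneg {p q : ℝ} (h0 : 0 ≤ p) (hpq : p ≤ q) (h1 : q ≤ 1) (b b' : Bool) :
    0 ≤ boolCoupling p q b b' := by
  cases b <;> cases b' <;> simp only [boolCoupling] <;> linarith

lemma le_of_boolCoupling_ne_zero {p q : ℝ} {b b' : Bool} (h : boolCoupling p q b b' ≠ 0) :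
    b ≤ b' := by
  cases b <;> cases b' <;> simp_all [boolCoupling]

lemma sum_boolCoupling_right (p q : ℝ) (b : Bool) :
    ∑ b', boolCoupling p q b b' = if b then p else 1 - p := by
  cases b <;> simp [boolCoupling]

lemma sum_boolCoupling_left (p q : ℝ) (b' : Bool) :
    ∑ b, boolCoupling p q b b' = if b' then q else 1 - q := by
  cases b' <;> simp [boolCoupling]

def piCoupling (p q : ι → ℝ) (ω ω' : ι → Bool) : ℝ :=
  ∏ i, boolCoupling (p i) (q i) (ω i) (ω' i)

lemma sum_piCoupling_right [DecidableEq ι] (p q : ι → ℝ) (ω : ι → Bool) :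
    ∑ ω', piCoupling p q ω ω' = bernoulliWeight p ω := by
  rw [bernoulliWeight, ← prod_congr rfl fun i _ => sum_boolCoupling_right (p i) (q i) (ω i),
    Fintype.prod_sum]
  rfl

lemma sum_piCoupling_left [DecidableEq ι] (p q : ι → ℝ) (ω' : ι → Bool) :
    ∑ ω, piCoupling p q ω ω' = bernoulliWeight q ω' := by
  rw [bernoulliWeight, ← prod_congr rfl fun i _ => sum_boolCoupling_left (p i) (q i) (ω' i),
    Fintype.prod_sum]
  rfl

lemma le_of_piCoupling_ne_zero {p q : ι → ℝ} {ω ω' : ι → Bool} (h : piCoupling p q ω ω' ≠ 0) :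
    ω ≤ ω' := fun i =>
  le_of_boolCoupling_ne_zero (Finset.prod_ne_zero_iff.mp h i (mem_univ i))

theorem sum_bernoulliWeight_mul_le [DecidableEq ι] {p q : ι → ℝ} (h0 : 0 ≤ p) (hpq : p ≤ q)
    (h1 : q ≤ 1) {f : (ι → Bool) → ℝ} (hf : Monotone f) :
    ∑ ω, bernoulliWeight p ω * f ω ≤ ∑ ω, bernoulliWeight q ω * f ω := by
  have hle (ω ω') : piCoupling p q ω ω' * f ω ≤ piCoupling p q ω ω' * f ω' := by
    rcases eq_or_ne (piCoupling p q ω ω') 0 with h | h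
    · simp [h]
    · exact mul_le_mul_of_nonneg_left (hf (le_of_piCoupling_ne_zero h))
        (prod_nonneg fun i _ => boolCoupling_nonneg (h0 i) (hpq i) (h1 i) _ _)
  calc ∑ ω, bernoulliWeight p ω * f ω
      = ∑ ω, ∑ ω', piCoupling p q ω ω' * f ω := by
        simp only [← sum_piCoupling_right p q, sum_mul]
    _ ≤ ∑ ω, ∑ ω', piCoupling p q ω ω' * f ω' :=
        sum_le_sum fun ω _ => sum_le_sum fun ω' _ => hle ω ω'
    _ = ∑ ω', bernoulliWeight q ω' * f ω' := by
        rw [sum_comm]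
        simp only [← sum_piCoupling_left p q, sum_mul]

end BernoulliCoupling

section Closure

abbrev OpenEdge (A : V → V → Bool) (ω : Coins V) (u v : V) : Prop :=
  ω.2.1 u = false ∧ A u v = true ∧ ω.2.2 u v = true

def spread (A : V → V → Bool) (ω : Coins V) (S : Finset V) : Finset V :=
  S ∪ univ.filter (fun v => ∃ u ∈ S, OpenEdge A ω u v)

lemma mem_spread {A : V → V → Bool} {ω : Coins V} {S : Finset V} {v : V} :
    v ∈ spread A ω S ↔ v ∈ S ∨ ∃ u ∈ S, OpenEdge A ω u v := by
  simp [spread]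

lemma spread_mono {A : V → V → Bool} {ω ω' : Coins V} (hω : OpenEdge A ω ≤ OpenEdge A ω')
    {S S' : Finset V} (hS : S ⊆ S') : spread A ω S ⊆ spread A ω' S' := by
  intro v
  simp only [mem_spread]
  rintro (hv | ⟨u, hu, huv⟩)
  · exact .inl (hS hv)
  · exact .inr ⟨u, hS hu, hω u v huv⟩

lemma sirProc_removed_closed (A : V → V → Bool) (ω : Coins V) (t : ℕ) {u v : V}
    (hu : u ∈ (sirProc A ω t).2) (huv : OpenEdge A ω u v) :
    v ∈ (sirProc A ω t).1 ∪ (sirProc A ω t).2 := by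
  induction t generalizing u with
  | zero => simp [sirProc] at hu
  | succ t ih =>
    simp only [sirProc, sirStep, mem_union, mem_filter, mem_univ, true_and] at hu ⊢
    rcases hu with hu | hu
    · exact .inr (mem_union.mp (ih hu huv)).symm
    · by_cases hv : v ∈ (sirProc A ω t).1 ∨ v ∈ (sirProc A ω t).2
      · exact .inr hv.symm
      · rw [not_or] at hv
        exact .inl ⟨hv.1, hv.2, u, hu, huv⟩

lemma union_sirStep (A : V → V → Bool) (ω : Coins V) (p : Finset V × Finset V)
    (hp : ∀ u ∈ p.2, ∀ v, OpenEdge A ω u v → v ∈ p.1 ∪ p.2) :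
    (sirStep A ω p).1 ∪ (sirStep A ω p).2 = spread A ω (p.1 ∪ p.2) := by
  ext v
  simp only [sirStep, mem_spread, mem_union, mem_filter, mem_univ, true_and]
  constructor
  · rintro (⟨-, -, u, hu, huv⟩ | hv | hv)
    · exact .inr ⟨u, .inl hu, huv⟩
    · exact .inl (.inr hv)
    · exact .inl (.inl hv)
  · rintro (hv | ⟨u, hu | hu, huv⟩)
    · exact .inr hv.symm
    · by_cases hv : v ∈ p.1 ∨ v ∈ p.2
      · exact .inr hv.symm
      · rw [not_or] at hv
        exact .inl ⟨hv.1, hv.2, u, hu, huv⟩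
    · exact .inr (mem_union.mp (hp u hu v huv)).symm

lemma union_sirProc (A : V → V → Bool) (ω : Coins V) (t : ℕ) :
    (sirProc A ω t).1 ∪ (sirProc A ω t).2 = (spread A ω)^[t] (univ.filter (ω.1 · = true)) := by
  induction t with
  | zero => simp [sirProc]
  | succ t ih =>
    rw [Function.iterate_succ_apply', ← ih, sirProc,
      union_sirStep A ω _ fun u hu v => sirProc_removed_closed A ω t hu]

lemma everInf_mono (A : V → V → Bool) {ω ω' : Coins V} (hinit : ω.1 ≤ ω'.1)
    (hopen : OpenEdge A ω ≤ OpenEdge A ω') : everInf A ω ⊆ everInf A ω' := by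
  rw [everInf, everInf, union_sirProc, union_sirProc]
  induction Fintype.card V with
  | zero => exact monotone_filter_right _ fun v _ => Bool.le_iff_imp.mp (hinit v)
  | succ n ih =>
    rw [Function.iterate_succ_apply', Function.iterate_succ_apply']
    exact spread_mono hopen ih

end Closure

section Encoding

/-- Removal coins are negated, so that turning any coin on can only enlarge the epidemic. -/
def coinsEquiv : Coins V ≃ (V ⊕ V ⊕ V × V → Bool) where
  toFun ω := Sum.elim ω.1 (Sum.elim (fun v => !ω.2.1 v) fun e => ω.2.2 e.1 e.2)
  invFun x := (fun v => x (.inl v), fun v => !x (.inr (.inl v)), fun u v => x (.inr (.inr (u, v))))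
  left_inv ω := by simp
  right_inv x := by ext (v | v | e) <;> simp

def coinParams (σ γ : V → ℝ) (τ : V → V → ℝ) : V ⊕ V ⊕ V × V → ℝ :=
  Sum.elim σ (Sum.elim (fun v => 1 - γ v) fun e => τ e.1 e.2)

omit [DecidableEq V] in
lemma coinWeight_eq_bernoulliWeight (σ γ : V → ℝ) (τ : V → V → ℝ) (ω : Coins V) :
    coinWeight σ γ τ ω = bernoulliWeight (coinParams σ γ τ) (coinsEquiv ω) := by
  simp only [coinWeight, mul_assoc, bernoulliWeight, coinsEquiv, Equiv.coe_fn_mk, coinParams,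
    Fintype.prod_sum_type, Sum.elim_inl, Sum.elim_inr, Bool.not_eq_eq_eq_not, Bool.not_true,
    ← Bool.not_eq_true, sub_sub_cancel, ite_not, Fintype.prod_prod_type]
  rfl

lemma meanExtent_eq_sum_bernoulliWeight (A : V → V → Bool) (σ γ : V → ℝ) (τ : V → V → ℝ) :
    meanExtent A σ γ τ = ∑ x, bernoulliWeight (coinParams σ γ τ) x *
      ((everInf A (coinsEquiv.symm x)).card : ℝ) :=
  Fintype.sum_equiv coinsEquiv _ _ fun ω => by
    rw [coinWeight_eq_bernoulliWeight, Equiv.symm_apply_apply]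

lemma monotone_card_everInf (A : V → V → Bool) :
    Monotone fun x => ((everInf A (coinsEquiv.symm x)).card : ℝ) := by
  intro x y hxy
  refine Nat.mono_cast (card_le_card (everInf_mono A (fun v => hxy (.inl v)) ?_))
  rintro u v ⟨hu, hA, huv⟩
  refine ⟨?_, hA, Bool.le_iff_imp.mp (hxy (.inr (.inr (u, v)))) huv⟩
  have hy : y (.inr (.inl u)) = true :=
    Bool.le_iff_imp.mp (hxy (.inr (.inl u))) (by simpa [coinsEquiv] using hu)
  simpa [coinsEquiv] using hy

omit [Fintype V] [DecidableEq V] in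
lemma coinParams_le {σ σ' γ γ' : V → ℝ} {τ τ' : V → V → ℝ} (hσ : σ ≤ σ') (hγ : γ' ≤ γ)
    (hτ : τ ≤ τ') : coinParams σ γ τ ≤ coinParams σ' γ' τ' := by
  rintro (v | v | e)
  · exact hσ v
  · exact sub_le_sub_left (hγ v) 1
  · exact hτ e.1 e.2

end Encoding

/-- **main theorem: monotonicity of SIR mean final extent.** For any
directed graph, if `σ₊ ≥ σ`, `γ₋ ≤ γ` and `τ₊ ≥ τ` pointwise (all being
probabilities), then the mean final extent of the epidemic `(σ₊, γ₋, τ₊)` is at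
least that of the epidemic `(σ, γ, τ)`. -/
theorem sir_mean_extent_monotone {V : Type*} [Fintype V] [DecidableEq V]
    (A : V → V → Bool) (σ σp γm γ : V → ℝ) (τ τp : V → V → ℝ)
    (hσ : ∀ v, 0 ≤ σ v ∧ σ v ≤ σp v ∧ σp v ≤ 1)
    (hγ : ∀ v, 0 ≤ γm v ∧ γm v ≤ γ v ∧ γ v ≤ 1)
    (hτ : ∀ u v, 0 ≤ τ u v ∧ τ u v ≤ τp u v ∧ τp u v ≤ 1) :
    meanExtent A σp γm τp ≥ meanExtent A σ γ τ := by
  have h0 : 0 ≤ coinParams σ γ τ := by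
    rintro (v | v | e)
    exacts [(hσ v).1, sub_nonneg.mpr (hγ v).2.2, (hτ e.1 e.2).1]
  have hle : coinParams σ γ τ ≤ coinParams σp γm τp :=
    coinParams_le (fun v => (hσ v).2.1) (fun v => (hγ v).2.1) fun u v => (hτ u v).2.1
  have h1 : coinParams σp γm τp ≤ 1 := by
    rintro (v | v | e)
    exacts [(hσ v).2.2, sub_le_self 1 (hγ v).1, (hτ e.1 e.2).2.2]
  rw [ge_iff_le, meanExtent_eq_sum_bernoulliWeight, meanExtent_eq_sum_bernoulliWeight]
  exact sum_bernoulliWeight_mul_le h0 hle h1 (monotone_card_everInf A)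
end

section
/- (Monotonicity can fail on average over networks only via topology: bridge-edge amplification.) For every M > 0 there exists a graph G consisting of two cliques of size m joined by a single bridge edge, and transmission functions τ₁, τ₂ with τ₁ larger than τ₂ on every edge except the bridge (where τ₁ is smaller), such that the mean final SIR extent under τ₂ exceeds the mean extent under τ₁ by at least M. -/
/-! Under `τ₁` every coin is deterministic: the bridge never transmits and every other pair
always does, so the epidemic is exactly the first clique and the mean extent is at most `m + 1`.
Under `τ₂` the bridge always transmits and every other pair transmits with probability `1 - ε`.
By Bernoulli's inequality all `(2(m+1))²` transmission coins are up with probability at least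
`1 - (2(m+1))² ε = 3/4` for `ε = 1 / (16 (m+1)²)`, and then every node is reached within two steps,
so the mean extent is at least `3 (m+1) / 2`. Taking `m ≥ 2M` gives the gap. -/


open Finset

variable {V : Type*} [Fintype V] [DecidableEq V]

/-- Two cliques of size `m+1` (on `Fin (m+1) ⊕ Fin (m+1)`) joined by the single
bridge edge between `inl 0` and `inr 0` (in both directions). -/
def twoCliqueBridge (m : ℕ) : (Fin (m+1) ⊕ Fin (m+1)) → (Fin (m+1) ⊕ Fin (m+1)) → Bool
  | .inl a, .inl b => decide (a ≠ b)
  | .inr a, .inr b => decide (a ≠ b)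
  | .inl a, .inr b => decide (a = 0 ∧ b = 0)
  | .inr a, .inl b => decide (a = 0 ∧ b = 0)

/-- Whether `(x, y)` is the bridge edge of the two-clique graph. -/
def isBridge {m : ℕ} (x y : Fin (m+1) ⊕ Fin (m+1)) : Prop :=
  (x = Sum.inl 0 ∧ y = Sum.inr 0) ∨ (x = Sum.inr 0 ∧ y = Sum.inl 0)

def sirReached (A : V → V → Bool) (ω : Coins V) (t : ℕ) : Finset V :=
  (sirProc A ω t).1 ∪ (sirProc A ω t).2

section Dynamics

variable {A : V → V → Bool} {ω : Coins V}

lemma mem_sirReached_zero {v : V} : v ∈ sirReached A ω 0 ↔ ω.1 v = true := by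
  simp [sirReached, sirProc]

lemma mem_sirReached_succ {t : ℕ} {v : V} :
    v ∈ sirReached A ω (t + 1) ↔ v ∈ sirReached A ω t ∨
      ∃ u ∈ (sirProc A ω t).1, ω.2.1 u = false ∧ A u v = true ∧ ω.2.2 u v = true := by
  simp only [sirReached, sirProc, sirStep, mem_union, mem_filter, mem_univ, true_and]
  grind

lemma sirReached_mono : Monotone (sirReached A ω) :=
  monotone_nat_of_le_succ fun _ _ hv => mem_sirReached_succ.2 (Or.inl hv)

lemma everInf_eq_sirReached : everInf A ω = sirReached A ω (Fintype.card V) := rfl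

lemma exists_mem_sirProc_fst_of_mem_sirReached {t : ℕ} {v : V} (hv : v ∈ sirReached A ω t) :
    ∃ s ≤ t, v ∈ (sirProc A ω s).1 := by
  induction t with
  | zero => exact ⟨0, le_rfl, by simpa [sirReached, sirProc] using hv⟩
  | succ t ih =>
    rcases mem_union.1 hv with hI | hR
    · exact ⟨t + 1, le_rfl, hI⟩
    · have hR' : v ∈ sirReached A ω t := by
        rcases mem_union.1 hR with h | h
        exacts [mem_union_right _ h, mem_union_left _ h]
      obtain ⟨s, hst, hs⟩ := ih hR'
      exact ⟨s, hst.trans t.le_succ, hs⟩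

lemma mem_sirReached_succ_of_transmit {t : ℕ} {u v : V} (hu : u ∈ sirReached A ω t)
    (hrem : ω.2.1 u = false) (hA : A u v = true) (hcoin : ω.2.2 u v = true) :
    v ∈ sirReached A ω (t + 1) := by
  obtain ⟨s, hst, hs⟩ := exists_mem_sirProc_fst_of_mem_sirReached hu
  exact sirReached_mono (Nat.succ_le_succ hst)
    (mem_sirReached_succ.2 (Or.inr ⟨u, hs, hrem, hA, hcoin⟩))

lemma sirReached_subset_of_closed {S : Finset V} (hinit : ∀ v, ω.1 v = true → v ∈ S)
    (hclosed : ∀ u v, u ∈ S → ω.2.1 u = false → A u v = true → ω.2.2 u v = true → v ∈ S)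
    (t : ℕ) : sirReached A ω t ⊆ S := by
  induction t with
  | zero => exact fun v hv => hinit v (mem_sirReached_zero.1 hv)
  | succ t ih =>
    intro v hv
    rcases mem_sirReached_succ.1 hv with hv | ⟨u, hu, hrem, hA, hcoin⟩
    · exact ih hv
    · exact hclosed u v (ih (mem_union_left _ hu)) hrem hA hcoin

end Dynamics

section CoinWeight

variable {α : Type*} [Fintype α] {σ γ : α → ℝ} {τ : α → α → ℝ}

lemma ite_bernoulli_indicator (b b₀ : Bool) :
    (if b then (if b₀ then 1 else 0 : ℝ) else 1 - if b₀ then 1 else 0) =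
      if b = b₀ then 1 else 0 := by
  cases b <;> cases b₀ <;> norm_num

lemma prod_bernoulli_indicator {ι : Type*} [Fintype ι] (b b₀ : ι → Bool) :
    (∏ i, if b i then (if b₀ i then 1 else 0 : ℝ) else 1 - if b₀ i then 1 else 0) =
      if b = b₀ then 1 else 0 := by
  simp only [ite_bernoulli_indicator, Fintype.prod_boole, funext_iff]

lemma coinWeight_nonneg (hσ : ∀ v, 0 ≤ σ v ∧ σ v ≤ 1) (hγ : ∀ v, 0 ≤ γ v ∧ γ v ≤ 1)
    (hτ : ∀ u v, 0 ≤ τ u v ∧ τ u v ≤ 1) (ω : Coins α) : 0 ≤ coinWeight σ γ τ ω := by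
  have hfactor : ∀ (b : Bool) (p : ℝ), 0 ≤ p ∧ p ≤ 1 → 0 ≤ if b then p else 1 - p := by
    rintro (_ | _) p ⟨h0, h1⟩ <;> simp only [Bool.false_eq_true, if_true, if_false] <;> linarith
  unfold coinWeight
  refine mul_nonneg (mul_nonneg ?_ ?_) ?_
  · exact prod_nonneg fun v _ => hfactor _ _ (hσ v)
  · exact prod_nonneg fun v _ => hfactor _ _ (hγ v)
  · exact prod_nonneg fun u _ => prod_nonneg fun v _ => hfactor _ _ (hτ u v)

lemma coinWeight_of_indicator (ω₀ : Coins α) (hσ : σ = fun v => if ω₀.1 v then 1 else 0)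
    (hγ : γ = fun v => if ω₀.2.1 v then 1 else 0)
    (hτ : τ = fun u v => if ω₀.2.2 u v then 1 else 0) (ω : Coins α) :
    coinWeight σ γ τ ω = if ω = ω₀ then 1 else 0 := by
  subst hσ hγ hτ
  simp only [coinWeight, prod_bernoulli_indicator, Fintype.prod_boole, ← funext_iff,
    ite_zero_mul_ite_zero, mul_one, Prod.ext_iff, and_assoc]

lemma one_sub_mul_le_coinWeight (ω₀ : Coins α) (hσ : σ = fun v => if ω₀.1 v then 1 else 0)
    (hγ : γ = fun v => if ω₀.2.1 v then 1 else 0) {ε : ℝ} (hε : ε ≤ 1)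
    (hτ : ∀ u v, 1 - ε ≤ if ω₀.2.2 u v then τ u v else 1 - τ u v) :
    1 - (Fintype.card α : ℝ) ^ 2 * ε ≤ coinWeight σ γ τ ω₀ := by
  subst hσ hγ
  have hpow : (1 - ε) ^ (Fintype.card α ^ 2) ≤
      ∏ u, ∏ v, if ω₀.2.2 u v then τ u v else 1 - τ u v := by
    rw [sq, pow_mul, ← Finset.card_univ, ← prod_const, ← prod_const]
    exact prod_le_prod (fun _ _ => prod_nonneg fun _ _ => by linarith)
      fun u _ => prod_le_prod (fun _ _ => by linarith) fun v _ => hτ u v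
  calc 1 - (Fintype.card α : ℝ) ^ 2 * ε = 1 + ((Fintype.card α ^ 2 : ℕ) : ℝ) * -ε := by
        push_cast; ring
    _ ≤ (1 - ε) ^ (Fintype.card α ^ 2) := by
        rw [sub_eq_add_neg]; exact one_add_mul_le_pow (by linarith) _
    _ ≤ coinWeight _ _ τ ω₀ := by
        simpa [coinWeight, prod_bernoulli_indicator] using hpow

end CoinWeight

section MeanExtent

variable {σ γ : V → ℝ} {τ : V → V → ℝ}

lemma coinWeight_mul_card_le_meanExtent (A : V → V → Bool) (hσ : ∀ v, 0 ≤ σ v ∧ σ v ≤ 1)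
    (hγ : ∀ v, 0 ≤ γ v ∧ γ v ≤ 1) (hτ : ∀ u v, 0 ≤ τ u v ∧ τ u v ≤ 1) (ω : Coins V) :
    coinWeight σ γ τ ω * (everInf A ω).card ≤ meanExtent A σ γ τ :=
  single_le_sum (f := fun ω => coinWeight σ γ τ ω * ((everInf A ω).card : ℝ))
    (fun ω _ => mul_nonneg (coinWeight_nonneg hσ hγ hτ ω) (Nat.cast_nonneg _)) (mem_univ ω)

lemma meanExtent_of_indicator (A : V → V → Bool) (ω₀ : Coins V)
    (hσ : σ = fun v => if ω₀.1 v then 1 else 0) (hγ : γ = fun v => if ω₀.2.1 v then 1 else 0)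
    (hτ : τ = fun u v => if ω₀.2.2 u v then 1 else 0) :
    meanExtent A σ γ τ = (everInf A ω₀).card := by
  simp [meanExtent, coinWeight_of_indicator ω₀ hσ hγ hτ]

end MeanExtent

def openCoins (v₀ : V) : Coins V :=
  (fun v => decide (v = v₀), fun _ => false, fun _ _ => true)

section TwoCliques

variable {m : ℕ}

instance (x y : Fin (m+1) ⊕ Fin (m+1)) : Decidable (isBridge x y) :=
  inferInstanceAs (Decidable (_ ∨ _))

def bridgeTransmission (m : ℕ) (b c : ℝ) (x y : Fin (m+1) ⊕ Fin (m+1)) : ℝ :=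
  if isBridge x y then b else c

def bridgeClosedCoins (m : ℕ) : Coins (Fin (m+1) ⊕ Fin (m+1)) :=
  (fun v => decide (v = .inl 0), fun _ => false, fun u v => !decide (isBridge u v))

lemma bridgeTransmission_mem_Icc {b c : ℝ} (hb : 0 ≤ b ∧ b ≤ 1) (hc : 0 ≤ c ∧ c ≤ 1)
    (x y : Fin (m+1) ⊕ Fin (m+1)) :
    0 ≤ bridgeTransmission m b c x y ∧ bridgeTransmission m b c x y ≤ 1 := by
  unfold bridgeTransmission; split_ifs <;> assumption

lemma card_twoCliques : Fintype.card (Fin (m+1) ⊕ Fin (m+1)) = 2 * (m + 1) := by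
  simp only [Fintype.card_sum, Fintype.card_fin]; ring

lemma everInf_bridgeClosedCoins_subset :
    everInf (twoCliqueBridge m) (bridgeClosedCoins m) ⊆ univ.map .inl := by
  rw [everInf_eq_sirReached]
  refine sirReached_subset_of_closed (fun v hv => ?_) (fun u v hu _ hA hcoin => ?_) _
  · simp_all [bridgeClosedCoins]
  · obtain ⟨a, -, rfl⟩ := mem_map.1 hu
    rcases v with b | b
    · exact mem_map_of_mem _ (mem_univ b)
    · simp_all [twoCliqueBridge, bridgeClosedCoins, isBridge]

lemma card_everInf_bridgeClosedCoins_le :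
    (everInf (twoCliqueBridge m) (bridgeClosedCoins m)).card ≤ m + 1 := by
  simpa using card_le_card everInf_bridgeClosedCoins_subset

lemma mem_sirReached_openCoins_two (v : Fin (m+1) ⊕ Fin (m+1)) :
    v ∈ sirReached (twoCliqueBridge m) (openCoins (.inl 0)) 2 := by
  have h0 : Sum.inl 0 ∈ sirReached (twoCliqueBridge m) (openCoins (.inl 0)) 0 := by
    simp [mem_sirReached_zero, openCoins]
  have step : ∀ {t u w}, u ∈ sirReached (twoCliqueBridge m) (openCoins (.inl 0)) t →
      twoCliqueBridge m u w = true →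
        w ∈ sirReached (twoCliqueBridge m) (openCoins (.inl 0)) (t + 1) :=
    fun hu hA => mem_sirReached_succ_of_transmit hu rfl hA rfl
  have hbridge := step h0 (w := .inr 0) (by simp [twoCliqueBridge])
  rcases v with a | b
  · by_cases ha : a = 0
    · subst ha; exact sirReached_mono zero_le_two h0
    · exact sirReached_mono one_le_two (step h0 (by simp [twoCliqueBridge, Ne.symm ha]))
  · by_cases hb : b = 0
    · subst hb; exact sirReached_mono one_le_two hbridge
    · exact step hbridge (by simp [twoCliqueBridge, Ne.symm hb])

lemma everInf_openCoins_eq_univ : everInf (twoCliqueBridge m) (openCoins (.inl 0)) = univ := by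
  rw [everInf_eq_sirReached]
  refine eq_univ_of_forall fun v => sirReached_mono ?_ (mem_sirReached_openCoins_two v)
  rw [card_twoCliques]; omega

lemma meanExtent_bridgeTransmission_zero_one_le :
    meanExtent (twoCliqueBridge m) (fun x => if x = .inl 0 then 1 else 0) (fun _ => 0)
      (bridgeTransmission m 0 1) ≤ m + 1 := by
  rw [meanExtent_of_indicator _ (bridgeClosedCoins m) (by funext x; simp [bridgeClosedCoins])
    (by funext x; simp [bridgeClosedCoins])
    (by funext x y; by_cases h : isBridge x y <;> simp [bridgeClosedCoins, bridgeTransmission, h])]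
  exact_mod_cast card_everInf_bridgeClosedCoins_le

lemma meanExtent_bridgeTransmission_one_ge {ε : ℝ} (hε₀ : 0 ≤ ε) (hε₁ : ε ≤ 1) :
    (1 - (2 * (m + 1)) ^ 2 * ε) * (2 * (m + 1)) ≤
      meanExtent (twoCliqueBridge m) (fun x => if x = .inl 0 then 1 else 0) (fun _ => 0)
        (bridgeTransmission m 1 (1 - ε)) := by
  have hweight := one_sub_mul_le_coinWeight (openCoins (.inl 0))
    (σ := fun x => if x = .inl 0 then 1 else 0) (γ := fun _ => 0)
    (τ := bridgeTransmission m 1 (1 - ε)) (by funext x; simp [openCoins])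
    (by funext x; simp [openCoins]) hε₁ fun u v => by
      show 1 - ε ≤ bridgeTransmission m 1 (1 - ε) u v
      unfold bridgeTransmission; split_ifs <;> linarith
  have hmean := coinWeight_mul_card_le_meanExtent (twoCliqueBridge m)
    (σ := fun x => if x = .inl 0 then 1 else 0) (γ := fun _ => 0)
    (τ := bridgeTransmission m 1 (1 - ε)) (fun x => by split_ifs <;> norm_num)
    (fun _ => ⟨le_rfl, zero_le_one⟩)
    (bridgeTransmission_mem_Icc ⟨zero_le_one, le_rfl⟩ ⟨by linarith, by linarith⟩)
    (openCoins (.inl 0))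
  rw [everInf_openCoins_eq_univ, card_univ, card_twoCliques] at hmean
  rw [card_twoCliques] at hweight
  push_cast at hweight hmean
  exact (mul_le_mul_of_nonneg_right hweight (by positivity)).trans hmean

end TwoCliques

/-- **bridge-edge amplification.** For every `M > 0` there is a graph
made of two cliques joined by a single bridge edge, with `γ ≡ 0` and a single initial
infectee in the first clique, and transmission functions `τ₁, τ₂` such that `τ₁` is
strictly larger than `τ₂` on every edge except the bridge (where `τ₁` is strictly
smaller), yet the mean final extent under `τ₂` exceeds the one under `τ₁` by at
least `M`. -/
theorem sir_bridge_amplification :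
    ∀ M : ℝ, 0 < M → ∃ m : ℕ,
      ∃ τ₁ τ₂ : (Fin (m+1) ⊕ Fin (m+1)) → (Fin (m+1) ⊕ Fin (m+1)) → ℝ,
        (∀ x y, 0 ≤ τ₁ x y ∧ τ₁ x y ≤ 1) ∧ (∀ x y, 0 ≤ τ₂ x y ∧ τ₂ x y ≤ 1) ∧
        (∀ x y, twoCliqueBridge m x y = true → ¬ isBridge x y → τ₂ x y < τ₁ x y) ∧
        (∀ x y, isBridge x y → τ₁ x y < τ₂ x y) ∧
        meanExtent (twoCliqueBridge m)
            (fun x => if x = Sum.inl 0 then 1 else 0) (fun _ => 0) τ₂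
          - meanExtent (twoCliqueBridge m)
            (fun x => if x = Sum.inl 0 then 1 else 0) (fun _ => 0) τ₁
          ≥ M := by
  intro M _
  set m := ⌈2 * M⌉₊
  set ε : ℝ := 1 / (16 * (m + 1) ^ 2) with hε
  have hε₀ : 0 < ε := by positivity
  have hε₁ : ε ≤ 1 := by
    rw [div_le_one (by positivity)]
    nlinarith [(m.cast_nonneg : (0 : ℝ) ≤ m)]
  refine ⟨m, bridgeTransmission m 0 1, bridgeTransmission m 1 (1 - ε),
    bridgeTransmission_mem_Icc ⟨le_rfl, zero_le_one⟩ ⟨zero_le_one, le_rfl⟩,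
    bridgeTransmission_mem_Icc ⟨zero_le_one, le_rfl⟩ ⟨by linarith, by linarith⟩,
    fun x y _ h => by simp [bridgeTransmission, h, hε₀],
    fun x y h => by simp [bridgeTransmission, h], ?_⟩
  have hupper := meanExtent_bridgeTransmission_zero_one_le (m := m)
  have hlower := meanExtent_bridgeTransmission_one_ge (m := m) hε₀.le hε₁
  have hquarter : (2 * ((m : ℝ) + 1)) ^ 2 * ε = 1 / 4 := by
    rw [hε]; field_simp; ring
  have hM : 2 * M ≤ m := Nat.le_ceil _
  rw [hquarter] at hlower
  linarith
end
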